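/- arXiv:2502.05060 — 4 statements merged into one kernel-verified Lean document; each statement's English description precedes it below -/
import Mathlib

section
/- For any probability vector (p_i)_{i∈R} with p_i > 0 for all i and Σ_i p_i < 1, there exists a unique compensation vector c : R → ℝ such that the MNL probabilities induced by c equal (p_i)_{i∈R}; it is given by c_i = −u_i + u_0 + μ·ln(p_i) − μ·ln(1 − Σ_l p_l). -/
/-!
Write `w i = exp ((u i + c i) / μ)` and `w₀ = exp (u₀ / μ)`. The MNL equations
`w i / (∑ w + w₀) = p i` say `w = p · D` with `D = ∑ w + w₀`; summing gives
`D (1 - ∑ p) = w₀`, so the weights are forced to be `w i = w₀ p i / (1 - ∑ p)`, and these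
weights do solve the equations. Since `exp` is injective, the weights determine `c`, and
taking logarithms gives the stated formula.
-/

open Real Finset

section OutsideOption

variable {ι : Type*} [Fintype ι] {p : ι → ℝ} {b : ℝ}

theorem div_sum_add_eq_of_eq_mul (hb : b ≠ 0) (hp : ∑ j, p j ≠ 1) (i : ι) :
    b * (p i / (1 - ∑ j, p j)) / (∑ j, b * (p j / (1 - ∑ j, p j)) + b) = p i := by
  have hS : 1 - ∑ j, p j ≠ 0 := sub_ne_zero.mpr (Ne.symm hp)
  rw [← mul_sum, ← sum_div]
  field_simp
  ring

theorem eq_mul_of_div_sum_add_eq {a : ι → ℝ} (hb : b ≠ 0) (hD : ∑ j, a j + b ≠ 0)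
    (h : ∀ i, a i / (∑ j, a j + b) = p i) : a = fun i => b * (p i / (1 - ∑ j, p j)) := by
  obtain ⟨D, hDdef⟩ : ∃ D, D = ∑ j, a j + b := ⟨_, rfl⟩
  rw [← hDdef] at hD h
  have ha : ∀ i, a i = p i * D := fun i => by rw [← h i, div_mul_cancel₀ _ hD]
  have hDS : D * (1 - ∑ j, p j) = b := by
    have hsum : ∑ j, a j = (∑ j, p j) * D := by
      rw [sum_mul]
      exact sum_congr rfl fun j _ => ha j
    linear_combination hDdef + hsum
  have hS : 1 - ∑ j, p j ≠ 0 := right_ne_zero_of_mul (hDS ▸ hb)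
  funext i
  rw [ha i, ← hDS]
  field_simp

end OutsideOption

theorem exp_add_div_eq_exp_mul_iff {u u0 c μ q : ℝ} (hμ : μ ≠ 0) (hq : 0 < q) :
    exp ((u + c) / μ) = exp (u0 / μ) * q ↔ c = -u + u0 + μ * log q := by
  rw [← exp_log hq, ← exp_add, exp_eq_exp, log_exp]
  constructor <;> intro h
  · field_simp at h
    linarith
  · rw [h]
    field_simp
    ring

/-- for any strictly positive (p_i) with ∑ p_i < 1, there is a unique
    compensation vector inducing those MNL probabilities, given by
    c_i = −u_i + u_0 + μ ln p_i − μ ln (1 − ∑ p). -/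
theorem mnl_surjective_onto_open_simplex
    {ι : Type*} [Fintype ι]
    (u : ι → ℝ) (u0 : ℝ) (μ : ℝ) (hμ : 0 < μ)
    (P : (ι → ℝ) → ι → ℝ)
    (hP : ∀ c i, P c i = Real.exp ((u i + c i) / μ) /
      ((∑ l, Real.exp ((u l + c l) / μ)) + Real.exp (u0 / μ)))
    (p : ι → ℝ) (hp : ∀ i, 0 < p i) (hps : ∑ i, p i < 1) :
    (∀ i, P (fun i => -u i + u0 + μ * Real.log (p i)
        - μ * Real.log (1 - ∑ l, p l)) i = p i) ∧
    ∀ c : ι → ℝ, (∀ i, P c i = p i) →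
      c = fun i => -u i + u0 + μ * Real.log (p i) - μ * Real.log (1 - ∑ l, p l) := by
  have hS : 0 < 1 - ∑ l, p l := by linarith
  have hq : ∀ i, 0 < p i / (1 - ∑ l, p l) := fun i => div_pos (hp i) hS
  have hlog : ∀ i,
      μ * log (p i) - μ * log (1 - ∑ l, p l) = μ * log (p i / (1 - ∑ l, p l)) := fun i => by
    rw [log_div (hp i).ne' hS.ne', mul_sub]
  have hweight : ∀ c : ι → ℝ,
      (∀ i, exp ((u i + c i) / μ) = exp (u0 / μ) * (p i / (1 - ∑ l, p l))) ↔
        c = fun i => -u i + u0 + μ * log (p i) - μ * log (1 - ∑ l, p l) := by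
    intro c
    simp only [funext_iff, exp_add_div_eq_exp_mul_iff hμ.ne' (hq _), add_sub_assoc, hlog]
  refine ⟨fun i => ?_, fun c hc => (hweight c).mp ?_⟩
  · simp only [hP, (hweight _).mpr rfl]
    exact div_sum_add_eq_of_eq_mul (exp_ne_zero _) hps.ne i
  · have hD : ∑ l, exp ((u l + c l) / μ) + exp (u0 / μ) ≠ 0 := by positivity
    have hmnl : ∀ i,
        exp ((u i + c i) / μ) / (∑ l, exp ((u l + c l) / μ) + exp (u0 / μ)) = p i :=
      fun i => (hP c i).symm.trans (hc i)
    exact congrFun (eq_mul_of_div_sum_add_eq (exp_ne_zero _) hD hmnl)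
end

section
/- Concavity of the expected-profit objective in probability space: the function φ(p) = Σ_{i∈R} p_i·(a_i − μ·ln(p_i)) + μ·(Σ_{i∈R} p_i)·ln(1 − Σ_{i∈R} p_i), defined on the open simplex {p : R → ℝ | p_i > 0 for all i, Σ_i p_i < 1}, is concave in p, for any constants a : R → ℝ and μ > 0. -/
/-!
Writing `S = ∑ i, p i`, the objective splits as `∑ i, p i * (a i - μ * log (p i))`, a sum of
concave functions of single coordinates (a linear term plus `μ • negMulLog`), and `μ` times
`g (1 - S)` with `g t = (1 - t) * log t = log t + negMulLog t`, a concave function of `t > 0`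
composed with an affine map of `p`.
-/

open Real Finset

theorem ConcaveOn.sum {𝕜 E β ι : Type*} [Semiring 𝕜] [PartialOrder 𝕜] [AddCommMonoid E]
    [AddCommMonoid β] [PartialOrder β] [IsOrderedAddMonoid β] [SMul 𝕜 E] [Module 𝕜 β]
    {s : Set E} {t : Finset ι} {f : ι → E → β} (hs : Convex 𝕜 s)
    (hf : ∀ i ∈ t, ConcaveOn 𝕜 s (f i)) : ConcaveOn 𝕜 s (∑ i ∈ t, f i) :=
  Finset.sum_induction f (ConcaveOn 𝕜 s) (fun _ _ => ConcaveOn.add) (concaveOn_const 0 hs) hf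

theorem concaveOn_sum_apply {𝕜 β ι : Type*} [Fintype ι] {E : ι → Type*} [Semiring 𝕜]
    [PartialOrder 𝕜] [∀ i, AddCommMonoid (E i)] [∀ i, Module 𝕜 (E i)]
    [AddCommMonoid β] [PartialOrder β] [IsOrderedAddMonoid β] [Module 𝕜 β]
    {s : ∀ i, Set (E i)} {g : ∀ i, E i → β} (hg : ∀ i, ConcaveOn 𝕜 (s i) (g i)) :
    ConcaveOn 𝕜 (Set.univ.pi s) fun p => ∑ i, g i (p i) := by
  have hs : Convex 𝕜 (Set.univ.pi s) := convex_pi fun i _ => (hg i).1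
  convert ConcaveOn.sum (t := univ) hs fun i _ =>
    ((hg i).comp_linearMap (LinearMap.proj i)).subset (fun p hp => hp i trivial) hs using 1
  ext p
  simp

theorem concaveOn_mul_sub_mul_log (c : ℝ) {μ : ℝ} (hμ : 0 ≤ μ) :
    ConcaveOn ℝ (Set.Ici 0) fun x => x * (c - μ * log x) := by
  refine ((c • LinearMap.id : ℝ →ₗ[ℝ] ℝ).concaveOn (convex_Ici 0) |>.add
    (concaveOn_negMulLog.smul hμ)).congr fun x _ => ?_
  simp only [Pi.add_apply, LinearMap.smul_apply, LinearMap.id_apply, smul_eq_mul,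
    negMulLog]
  ring

theorem concaveOn_one_sub_mul_log : ConcaveOn ℝ (Set.Ioi 0) fun t => (1 - t) * log t := by
  refine (strictConcaveOn_log_Ioi.concaveOn.add
    (concaveOn_negMulLog.subset Set.Ioi_subset_Ici_self (convex_Ioi 0))).congr fun t _ => ?_
  simp only [Pi.add_apply, negMulLog]
  ring

noncomputable def oneSubSum (ι : Type*) [Fintype ι] : (ι → ℝ) →ᵃ[ℝ] ℝ :=
  AffineMap.const ℝ (ι → ℝ) (1 : ℝ) - (∑ i, LinearMap.proj i : (ι → ℝ) →ₗ[ℝ] ℝ).toAffineMap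

theorem concaveOn_sum_mul_log_one_sub_sum {ι : Type*} [Fintype ι] :
    ConcaveOn ℝ {p : ι → ℝ | ∑ i, p i < 1} fun p => (∑ i, p i) * log (1 - ∑ i, p i) := by
  have hpre : oneSubSum ι ⁻¹' Set.Ioi 0 = {p | ∑ i, p i < 1} := by
    ext p; simp [oneSubSum]
  refine (hpre ▸ concaveOn_one_sub_mul_log.comp_affineMap (oneSubSum ι)).congr fun p _ => ?_
  simp [oneSubSum]

theorem convex_openSimplex {ι : Type*} [Fintype ι] :
    Convex ℝ {p : ι → ℝ | (∀ i, 0 < p i) ∧ ∑ i, p i < 1} := by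
  have hpos : Convex ℝ {p : ι → ℝ | ∀ i, 0 < p i} := by
    simpa [Set.pi] using convex_pi (s := Set.univ) fun (i : ι) _ => convex_Ioi (0 : ℝ)
  exact hpos.inter <| convex_halfSpace_lt (f := fun p : ι → ℝ => ∑ i, p i)
    ⟨fun p q => Finset.sum_add_distrib, fun c p => (Finset.mul_sum _ _ _).symm⟩ 1

theorem phi_concave_on_open_simplex_general
    {ι : Type*} [Fintype ι]
    (a : ι → ℝ) (μ : ℝ) (hμ : 0 < μ) :
    ConcaveOn ℝ {p : ι → ℝ | (∀ i, 0 < p i) ∧ ∑ i, p i < 1}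
      (fun p => (∑ i, p i * (a i - μ * Real.log (p i)))
        + μ * (∑ i, p i) * Real.log (1 - ∑ i, p i)) := by
  have hentropy := concaveOn_sum_apply fun i => concaveOn_mul_sub_mul_log (a i) hμ.le
  have hboundary := (concaveOn_sum_mul_log_one_sub_sum (ι := ι)).smul hμ.le
  refine ((hentropy.subset (fun p hp i _ => (hp.1 i).le) convex_openSimplex).add
    (hboundary.subset (fun p hp => hp.2) convex_openSimplex)).congr fun p _ => ?_
  simp only [Pi.add_apply, smul_eq_mul]
  ring

/-- concavity of the expected-profit objective in probability space. -/
theorem phi_concave_on_open_simplex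
    {ι : Type*} [Fintype ι] [Nonempty ι]
    (a : ι → ℝ) (μ : ℝ) (hμ : 0 < μ) :
    ConcaveOn ℝ {p : ι → ℝ | (∀ i, 0 < p i) ∧ ∑ i, p i < 1}
      (fun p => (∑ i, p i * (a i - μ * Real.log (p i)))
        + μ * (∑ i, p i) * Real.log (1 - ∑ i, p i)) :=
  phi_concave_on_open_simplex_general a μ hμ
end

section
/- Structure of the optimal compensation: if m solves (m/μ − 1)·exp(m/μ − 1) = Σ_{i∈R} exp((a_i − μ)/μ) with m ≥ μ, and we set c_i = a_i + u_0 − u_i − m (i.e., c_i = r_i − β_i·1[expire] − Δ_i − m), then the induced MNL probabilities p_i = exp((u_i + c_i − u_0)/μ)·p_∅ satisfy the first-order optimality condition of φ; in particular p_i/p_∅ = exp((a_i − m)/μ) and Σ_i p_i/p_∅ = m/μ − 1. -/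
/-!
Under the compensation `c`, every `u i + c i` equals `a i + u0 - m`, so the MNL odds `p i / p0`
are `exp ((a i - m) / μ)`. Multiplying the fixed-point equation by `exp (1 - m / μ)` says exactly
that these odds sum to `m / μ - 1`. Since `1 - ∑ p = p0`, the partial derivative of `φ` in `p i`
collapses to `a i - μ log (p i / p0) - μ - μ (∑ p) / p0 = a i - (a i - m) - μ - (m - μ) = 0`.
-/

open Real Finset

section MNL

variable {ι : Type*} [Fintype ι] (v : ι → ℝ) (v0 μ : ℝ)

theorem mnl_denom_pos : 0 < ∑ l, exp (v l / μ) + exp (v0 / μ) :=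
  add_pos_of_nonneg_of_pos (sum_nonneg fun _ _ => (exp_pos _).le) (exp_pos _)

theorem mnl_sum_add_outside_eq_one :
    ∑ i, exp (v i / μ) / (∑ l, exp (v l / μ) + exp (v0 / μ))
      + exp (v0 / μ) / (∑ l, exp (v l / μ) + exp (v0 / μ)) = 1 := by
  rw [← sum_div, ← add_div, div_self (mnl_denom_pos v v0 μ).ne']

theorem mnl_odds (i : ι) :
    exp (v i / μ) / (∑ l, exp (v l / μ) + exp (v0 / μ))
      / (exp (v0 / μ) / (∑ l, exp (v l / μ) + exp (v0 / μ))) = exp ((v i - v0) / μ) := by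
  rw [div_div_div_cancel_right₀ (mnl_denom_pos v v0 μ).ne', ← exp_sub, sub_div]

end MNL

theorem sum_exp_sub_div_eq_of_mul_exp_eq {ι : Type*} [Fintype ι] {a : ι → ℝ} {μ m : ℝ}
    (hμ : μ ≠ 0)
    (hfix : (m / μ - 1) * exp (m / μ - 1) = ∑ i, exp ((a i - μ) / μ)) :
    ∑ i, exp ((a i - m) / μ) = m / μ - 1 := by
  have hshift : ∀ i, exp ((a i - m) / μ) = exp ((a i - μ) / μ) * exp (-(m / μ - 1)) := by
    intro i
    rw [← exp_add]
    congr 1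
    field_simp
    ring
  calc ∑ i, exp ((a i - m) / μ)
      = (∑ i, exp ((a i - μ) / μ)) * exp (-(m / μ - 1)) := by
        rw [sum_mul]; exact sum_congr rfl fun i _ => hshift i
    _ = (m / μ - 1) * (exp (m / μ - 1) * exp (-(m / μ - 1))) := by rw [← hfix, mul_assoc]
    _ = m / μ - 1 := by rw [← exp_add, add_neg_cancel, exp_zero, mul_one]

theorem mnl_first_order_condition {ι : Type*} [Fintype ι] {a p : ι → ℝ} {p0 μ m : ℝ}
    (hμ : μ ≠ 0) (hp0 : 0 < p0) (htotal : ∑ l, p l + p0 = 1)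
    (hodds : ∀ i, p i / p0 = exp ((a i - m) / μ)) (hsum : (∑ l, p l) / p0 = m / μ - 1) (i : ι) :
    a i - μ * log (p i) - μ + μ * log (1 - ∑ l, p l)
      - μ * (∑ l, p l) / (1 - ∑ l, p l) = 0 := by
  have hp : p i = p0 * exp ((a i - m) / μ) := by
    rw [← hodds i, mul_div_cancel₀ _ hp0.ne']
  have hlog : μ * log (p i) = μ * log p0 + (a i - m) := by
    rw [hp, log_mul hp0.ne' (exp_pos _).ne', log_exp, mul_add, mul_div_cancel₀ _ hμ]
  have houtside : 1 - ∑ l, p l = p0 := by linarith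
  have hscaled : μ * (∑ l, p l) / p0 = m - μ := by
    rw [mul_div_assoc, hsum]
    field_simp
  rw [houtside, hscaled, hlog]
  ring

theorem optimal_compensation_structure_general
    {ι : Type*} [Fintype ι]
    (a u : ι → ℝ) (u0 : ℝ) (μ : ℝ) (hμ : 0 < μ)
    (m : ℝ)
    (hfix : (m / μ - 1) * Real.exp (m / μ - 1) = ∑ i, Real.exp ((a i - μ) / μ))
    (c : ι → ℝ) (hc : ∀ i, c i = a i + u0 - u i - m)
    (p : ι → ℝ) (p0 : ℝ)
    (hp : ∀ i, p i = Real.exp ((u i + c i) / μ) /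
      ((∑ l, Real.exp ((u l + c l) / μ)) + Real.exp (u0 / μ)))
    (hp0 : p0 = Real.exp (u0 / μ) /
      ((∑ l, Real.exp ((u l + c l) / μ)) + Real.exp (u0 / μ))) :
    (∀ i, p i / p0 = Real.exp ((a i - m) / μ)) ∧
    (∑ i, p i) / p0 = m / μ - 1 ∧
    (∀ i, a i - μ * Real.log (p i) - μ + μ * Real.log (1 - ∑ l, p l)
      - μ * (∑ l, p l) / (1 - ∑ l, p l) = 0) := by
  set v : ι → ℝ := fun i => u i + c i
  have hodds : ∀ i, p i / p0 = exp ((a i - m) / μ) := by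
    intro i
    rw [hp i, hp0, mnl_odds v u0 μ i]
    simp only [v, hc]
    ring_nf
  have hsum : (∑ i, p i) / p0 = m / μ - 1 := by
    rw [sum_div, ← sum_exp_sub_div_eq_of_mul_exp_eq hμ.ne' hfix]
    exact sum_congr rfl fun i _ => hodds i
  have hp0_pos : 0 < p0 := hp0 ▸ div_pos (exp_pos _) (mnl_denom_pos v u0 μ)
  have htotal : ∑ l, p l + p0 = 1 := by
    simp only [hp, hp0]
    exact mnl_sum_add_outside_eq_one v u0 μ
  exact ⟨hodds, hsum, mnl_first_order_condition hμ.ne' hp0_pos htotal hodds hsum⟩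

/-- structure of the optimal compensation: with m solving the
    fixed-point equation and c_i = a_i + u_0 − u_i − m, the induced MNL
    probabilities satisfy p_i/p_∅ = exp((a_i − m)/μ), Σ p_i/p_∅ = m/μ − 1,
    and the first-order optimality condition of φ. -/
theorem optimal_compensation_structure
    {ι : Type*} [Fintype ι] [Nonempty ι]
    (a u : ι → ℝ) (u0 : ℝ) (μ : ℝ) (hμ : 0 < μ)
    (m : ℝ) (hm : μ ≤ m)
    (hfix : (m / μ - 1) * Real.exp (m / μ - 1) = ∑ i, Real.exp ((a i - μ) / μ))
    (c : ι → ℝ) (hc : ∀ i, c i = a i + u0 - u i - m)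
    (p : ι → ℝ) (p0 : ℝ)
    (hp : ∀ i, p i = Real.exp ((u i + c i) / μ) /
      ((∑ l, Real.exp ((u l + c l) / μ)) + Real.exp (u0 / μ)))
    (hp0 : p0 = Real.exp (u0 / μ) /
      ((∑ l, Real.exp ((u l + c l) / μ)) + Real.exp (u0 / μ))) :
    (∀ i, p i / p0 = Real.exp ((a i - m) / μ)) ∧
    (∑ i, p i) / p0 = m / μ - 1 ∧
    (∀ i, a i - μ * Real.log (p i) - μ + μ * Real.log (1 - ∑ l, p l)
      - μ * (∑ l, p l) / (1 - ∑ l, p l) = 0) :=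
  optimal_compensation_structure_general a u u0 μ hμ m hfix c hc p p0 hp hp0
end

section
/- Strict concavity of the single-alternative revenue function in probability space: for R a singleton {i}, φ(p) = p·(a − μ·ln p) + μ·p·ln(1 − p) is strictly concave on (0,1), and its unique maximizer p* ∈ (0,1) satisfies a − μ·ln(p*/(1 − p*)) = μ/(1 − p*). -/
open Real Set Filter

/-
The derivative of `φ` is `ψ p = a - μ log (p / (1 - p)) - μ / (1 - p)`, which is strictly
decreasing on `(0,1)` because both the log-odds and `1 / (1 - p)` increase; hence `φ` is strictly
concave. In the log-odds coordinate `p = sigmoid t`, `ψ` becomes `a - μ (t + eᵗ) - μ`, and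
`t ↦ t + eᵗ` maps `ℝ` onto `ℝ`, so `ψ` has a zero. A critical point of a concave function is a
global maximum, and strict concavity makes it the only one.
-/

noncomputable def revenue (a μ : ℝ) : ℝ → ℝ :=
  fun p => p * (a - μ * log p) + μ * p * log (1 - p)

noncomputable def marginalRevenue (a μ : ℝ) (p : ℝ) : ℝ :=
  a - μ * log (p / (1 - p)) - μ / (1 - p)

lemma ConcaveOn.isMaxOn_of_hasDerivAt_eq_zero {S : Set ℝ} {f : ℝ → ℝ} {x : ℝ}
    (hf : ConcaveOn ℝ S f) (hx : x ∈ S) (hf' : HasDerivAt f 0 x) : IsMaxOn f S x := by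
  intro y hy
  rcases lt_trichotomy x y with hxy | rfl | hyx
  · exact (slope_nonpos_iff_of_le hxy.le).1 (hf.slope_le_of_hasDerivAt hx hy hxy hf')
  · exact le_refl (f x)
  · exact (slope_nonneg_iff_of_le hyx.le).1 (hf.le_slope_of_hasDerivAt hy hx hyx hf')

lemma surjective_add_exp : Function.Surjective fun t : ℝ => t + exp t :=
  (continuous_id.add continuous_exp).surjective
    (tendsto_id.atTop_add_atTop tendsto_exp_atTop)
    (tendsto_id.atBot_add tendsto_exp_atBot)

lemma one_sub_sigmoid (t : ℝ) : 1 - sigmoid t = (1 + exp t)⁻¹ := by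
  rw [← sigmoid_neg, sigmoid_def, neg_neg]

lemma sigmoid_div_one_sub_sigmoid (t : ℝ) : sigmoid t / (1 - sigmoid t) = exp t := by
  rw [one_sub_sigmoid, sigmoid_def, exp_neg]
  field_simp
  ring

lemma hasDerivAt_revenue (a μ : ℝ) {p : ℝ} (hp : p ∈ Ioo (0 : ℝ) 1) :
    HasDerivAt (revenue a μ) (marginalRevenue a μ p) p := by
  have hp0 : p ≠ 0 := hp.1.ne'
  have hp1 : 1 - p ≠ 0 := (sub_pos.2 hp.2).ne'
  have hlog : HasDerivAt (fun q => log (1 - q)) (-1 / (1 - p)) p :=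
    ((hasDerivAt_id p).const_sub 1).log hp1
  refine HasDerivAt.congr_deriv (f := revenue a μ)
    (((hasDerivAt_id p).mul (((hasDerivAt_log hp0).const_mul μ).const_sub a)).add
      (((hasDerivAt_id p).const_mul μ).mul hlog)) ?_
  rw [marginalRevenue, log_div hp0 hp1, id]
  field_simp
  ring

lemma marginalRevenue_sigmoid (a μ t : ℝ) :
    marginalRevenue a μ (sigmoid t) = a - μ * (t + exp t) - μ := by
  rw [marginalRevenue, sigmoid_div_one_sub_sigmoid, log_exp, one_sub_sigmoid, div_inv_eq_mul]
  ring

lemma exists_marginalRevenue_eq_zero (a : ℝ) {μ : ℝ} (hμ : 0 < μ) :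
    ∃ p ∈ Ioo (0 : ℝ) 1, marginalRevenue a μ p = 0 := by
  obtain ⟨t, ht⟩ : ∃ t, t + exp t = a / μ - 1 := surjective_add_exp _
  refine ⟨sigmoid t, ⟨sigmoid_pos t, sigmoid_lt_one t⟩, ?_⟩
  rw [marginalRevenue_sigmoid, ht]
  field_simp
  ring

lemma strictAntiOn_marginalRevenue (a : ℝ) {μ : ℝ} (hμ : 0 < μ) :
    StrictAntiOn (marginalRevenue a μ) (Ioo 0 1) := by
  intro p hp q hq hpq
  have hp1 : 0 < 1 - p := sub_pos.2 hp.2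
  have hq1 : 0 < 1 - q := sub_pos.2 hq.2
  have hodds : p / (1 - p) < q / (1 - q) := by
    rw [div_lt_div_iff₀ hp1 hq1]
    linarith
  have hlog : log (p / (1 - p)) < log (q / (1 - q)) := log_lt_log (div_pos hp.1 hp1) hodds
  have hinv : μ / (1 - p) < μ / (1 - q) := div_lt_div_of_pos_left hμ hq1 (by linarith)
  have := mul_lt_mul_of_pos_left hlog hμ
  simp only [marginalRevenue]
  linarith

lemma strictConcaveOn_revenue (a : ℝ) {μ : ℝ} (hμ : 0 < μ) :
    StrictConcaveOn ℝ (Ioo 0 1) (revenue a μ) := by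
  refine StrictAntiOn.strictConcaveOn_of_deriv (convex_Ioo 0 1)
    (fun p hp => (hasDerivAt_revenue a μ hp).continuousAt.continuousWithinAt) ?_
  rw [interior_Ioo]
  exact (strictAntiOn_marginalRevenue a hμ).congr fun p hp =>
    (hasDerivAt_revenue a μ hp).deriv.symm

/-- strict concavity of the single-alternative objective
    φ(p) = p(a − μ ln p) + μ p ln(1 − p) on (0,1), and its unique maximizer
    p* satisfies a − μ ln(p*/(1 − p*)) = μ/(1 − p*). -/
theorem single_alternative_strict_concavity
    (a μ : ℝ) (hμ : 0 < μ) :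
    StrictConcaveOn ℝ (Set.Ioo (0 : ℝ) 1)
      (fun p => p * (a - μ * Real.log p) + μ * p * Real.log (1 - p)) ∧
    ∃ p ∈ Set.Ioo (0 : ℝ) 1,
      IsMaxOn (fun p => p * (a - μ * Real.log p) + μ * p * Real.log (1 - p))
        (Set.Ioo (0 : ℝ) 1) p ∧
      a - μ * Real.log (p / (1 - p)) = μ / (1 - p) ∧
      ∀ q ∈ Set.Ioo (0 : ℝ) 1,
        IsMaxOn (fun p => p * (a - μ * Real.log p) + μ * p * Real.log (1 - p))
          (Set.Ioo (0 : ℝ) 1) q → q = p := by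
  have hconc := strictConcaveOn_revenue a hμ
  obtain ⟨p, hp, hcrit⟩ := exists_marginalRevenue_eq_zero a hμ
  have hmax : IsMaxOn (revenue a μ) (Ioo 0 1) p :=
    hconc.concaveOn.isMaxOn_of_hasDerivAt_eq_zero hp (hcrit ▸ hasDerivAt_revenue a μ hp)
  exact ⟨hconc, p, hp, hmax, sub_eq_zero.1 hcrit,
    fun q hq hqmax => hconc.eq_of_isMaxOn hqmax hmax hq hp⟩
end
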